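/- Under equal task allocation d_k = d/K for all k, the maximal feasible number of iterations is τ_ETA = min_k (T − C_k¹ d/K − C_k⁰)·K/(C_k² d), and this is at most the value τ* solving ∑_k (T − C_k⁰)/(τ C_k² + C_k¹) = d (when both are nonnegative). -/
import Mathlib


theorem eta_suboptimal {ι : Type*} [Fintype ι] [Nonempty ι]
    (C2 C1 C0 : ι → ℝ) (d T : ℝ)
    (h2 : ∀ k, 0 < C2 k) (h1 : ∀ k, 0 < C1 k) (h0 : ∀ k, 0 ≤ C0 k) (hd : 0 < d)
    (hT : ∀ k, C1 k * (d / (Fintype.card ι)) + C0 k < T)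
    (τETA : ℝ)
    (hτETA : τETA = ⨅ k, (T - C1 k * (d / (Fintype.card ι)) - C0 k) *
        (Fintype.card ι) / (C2 k * d))
    (hτETAnn : 0 ≤ τETA)
    (τstar : ℝ) (hτstarnn : 0 ≤ τstar)
    (hsol : ∑ k, (T - C0 k) / (τstar * C2 k + C1 k) = d) :
    IsGreatest {τ : ℝ | 0 ≤ τ ∧ ∀ k,
        C2 k * τ * (d / (Fintype.card ι)) + C1 k * (d / (Fintype.card ι)) + C0 k ≤ T}
      τETA ∧ τETA ≤ τstar := by
  set K : ℝ := (Fintype.card ι : ℝ) with hKdef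
  have hK : 0 < K := by
    simp only [hKdef]
    exact_mod_cast Fintype.card_pos
  have hdK : d / K * K = d := div_mul_cancel₀ d (ne_of_gt hK)
  have e1 : ∀ k, C1 k * (d / K) * K = C1 k * d := fun k => by rw [mul_assoc, hdK]
  have hle : ∀ k, τETA ≤ (T - C1 k * (d / K) - C0 k) * K / (C2 k * d) := by
    intro k
    rw [hτETA]
    exact ciInf_le (Finite.bddBelow_range _) k
  constructor
  · constructor
    · refine ⟨hτETAnn, fun k => ?_⟩
      have h := (le_div_iff₀ (mul_pos (h2 k) hd)).mp (hle k)
      have e2 : C2 k * τETA * (d / K) * K = τETA * (C2 k * d) := by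
        rw [mul_assoc]; rw [hdK]; ring
      have hgoal : (C2 k * τETA * (d / K) + C1 k * (d / K) + C0 k) * K ≤ T * K := by
        nlinarith [e1 k, e2, h]
      exact le_of_mul_le_mul_right hgoal hK
    · intro τ hτ
      obtain ⟨hτnn, hτk⟩ := hτ
      rw [hτETA]
      apply le_ciInf
      intro k
      rw [le_div_iff₀ (mul_pos (h2 k) hd)]
      have h := mul_le_mul_of_nonneg_right (hτk k) hK.le
      have e2 : C2 k * τ * (d / K) * K = τ * (C2 k * d) := by
        rw [mul_assoc]; rw [hdK]; ring
      nlinarith [e1 k, e2, h]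
  · by_contra hlt
    push_neg at hlt
    have key : ∀ k, d / K < (T - C0 k) / (τstar * C2 k + C1 k) := by
      intro k
      have hden : 0 < τstar * C2 k + C1 k := by
        have := h1 k
        nlinarith [mul_nonneg hτstarnn (h2 k).le]
      rw [div_lt_div_iff₀ hK hden]
      have h := lt_of_lt_of_le hlt (hle k)
      rw [lt_div_iff₀ (mul_pos (h2 k) hd)] at h
      nlinarith [e1 k, h]
    have hsum : ∑ k : ι, d / K < ∑ k, (T - C0 k) / (τstar * C2 k + C1 k) :=
      Finset.sum_lt_sum_of_nonempty Finset.univ_nonempty (fun k _ => key k)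
    rw [hsol, Finset.sum_const, Finset.card_univ, nsmul_eq_mul] at hsum
    rw [show (Fintype.card ι : ℝ) * (d / K) = d by rw [mul_comm]; exact hdK] at hsum
    exact lt_irrefl d hsum
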